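/- arXiv:2107.07456 — 3 statements merged into one kernel-verified Lean document; each statement's English description precedes it below -/
import Mathlib

section
/- Let x : I → ℝ^N be a solution of x'(t) = P(x(t)) on I = [a, b], and suppose there exists t₀ ∈ I with t₀ < b such that x(t) = x(t₀) for all t ∈ [t₀, b] (an equilibrium is reached). If φ : ℝ^N → ℂ satisfies d/dt [φ(x(t))] = λ·φ(x(t)) on I with λ ≠ 0, then φ(x(t)) = 0 for all t ∈ I. -/
/-!
The composite `t ↦ φ (x t)` is constant near any point of `(t₀, b)`, so there its derivative
`λ φ (x t)` vanishes, and `λ ≠ 0` gives `φ (x t₀) = 0`. Solutions of `f' = λ f` are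
`f t = exp (λ (t - t₀)) f t₀` (the integrating factor `exp (-λ t)` kills the derivative),
so a zero at one time forces `f ≡ 0` on the interval.
-/

open Set Filter Topology

variable {E : Type*} [NormedAddCommGroup E] [NormedSpace ℂ E] {f : ℝ → E} {lam : ℂ}

theorem hasDerivAt_cexp_neg_mul_smul {t : ℝ} (hf : HasDerivAt f (lam • f t) t) :
    HasDerivAt (fun s : ℝ => Complex.exp (-lam * s) • f s) 0 t := by
  have hexp : HasDerivAt (fun s : ℝ => Complex.exp (-lam * s))
      (Complex.exp (-lam * t) * (-lam * 1)) t :=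
    ((hasDerivAt_id t).ofReal_comp.const_mul (-lam)).cexp
  refine (hexp.smul hf).congr_deriv ?_
  rw [smul_smul, ← add_smul]
  ring_nf
  exact zero_smul ℂ _

theorem eq_cexp_mul_smul_of_hasDerivAt_smul {a b t₀ : ℝ}
    (hf : ∀ t ∈ Icc a b, HasDerivAt f (lam • f t) t) (ht₀ : t₀ ∈ Icc a b) :
    ∀ t ∈ Icc a b, f t = Complex.exp (lam * (t - t₀)) • f t₀ := by
  set g : ℝ → E := fun s => Complex.exp (-lam * s) • f s
  have hg : ∀ t ∈ Icc a b, HasDerivAt g 0 t := fun t ht => hasDerivAt_cexp_neg_mul_smul (hf t ht)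
  have hconst : ∀ t ∈ Icc a b, g t = g a :=
    constant_of_has_deriv_right_zero (fun t ht => (hg t ht).continuousAt.continuousWithinAt)
      (fun t ht => (hg t (Ico_subset_Icc_self ht)).hasDerivWithinAt)
  intro t ht
  have hgt : g t = g t₀ := (hconst t ht).trans (hconst t₀ ht₀).symm
  calc f t = Complex.exp (lam * t) • g t := by
        simp [g, smul_smul, ← Complex.exp_add]
    _ = Complex.exp (lam * (t - t₀)) • f t₀ := by
        rw [hgt, smul_smul, ← Complex.exp_add]
        ring_nf

theorem HasDerivAt.eq_zero_of_smul_of_eventuallyEq_const {s : ℝ} {c : E}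
    (hf : HasDerivAt f (lam • f s) s) (hc : f =ᶠ[𝓝 s] fun _ => c) (hlam : lam ≠ 0) :
    f s = 0 :=
  (smul_eq_zero.mp (hf.unique ((hasDerivAt_const s c).congr_of_eventuallyEq hc))).resolve_left hlam

theorem equilibrium_forces_trivial_eigenfunction_general
    {N : ℕ} (a b t₀ : ℝ)
    (x : ℝ → EuclideanSpace ℝ (Fin N))
    (φ : EuclideanSpace ℝ (Fin N) → ℂ) (lam : ℂ)
    (ht₀ : t₀ ∈ Set.Icc a b) (ht₀b : t₀ < b)
    (heq : ∀ t ∈ Set.Icc t₀ b, x t = x t₀)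
    (hφ : ∀ t ∈ Set.Icc a b, HasDerivAt (fun s => φ (x s)) (lam * φ (x t)) t)
    (hlam : lam ≠ 0) :
    ∀ t ∈ Set.Icc a b, φ (x t) = 0 := by
  obtain ⟨s, hs⟩ : (Ioo t₀ b).Nonempty := nonempty_Ioo.2 ht₀b
  have hxs : x s = x t₀ := heq s (Ioo_subset_Icc_self hs)
  have hconst : (fun u => φ (x u)) =ᶠ[𝓝 s] fun _ => φ (x t₀) := by
    filter_upwards [Ioo_mem_nhds hs.1 hs.2] with u hu
    rw [heq u (Ioo_subset_Icc_self hu)]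
  have hsI : s ∈ Icc a b := ⟨ht₀.1.trans hs.1.le, hs.2.le⟩
  have h₀ : φ (x t₀) = 0 := hxs ▸ (hφ s hsI).eq_zero_of_smul_of_eventuallyEq_const hconst hlam
  intro t ht
  rw [eq_cexp_mul_smul_of_hasDerivAt_smul hφ ht₀ t ht, h₀, smul_zero]

theorem equilibrium_forces_trivial_eigenfunction
    {N : ℕ} (a b t₀ : ℝ)
    (P : EuclideanSpace ℝ (Fin N) → EuclideanSpace ℝ (Fin N))
    (x : ℝ → EuclideanSpace ℝ (Fin N))
    (φ : EuclideanSpace ℝ (Fin N) → ℂ) (lam : ℂ)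
    (hx : ∀ t ∈ Set.Icc a b, HasDerivAt x (P (x t)) t)
    (ht₀ : t₀ ∈ Set.Icc a b) (ht₀b : t₀ < b)
    (heq : ∀ t ∈ Set.Icc t₀ b, x t = x t₀)
    (hφ : ∀ t ∈ Set.Icc a b, HasDerivAt (fun s => φ (x s)) (lam * φ (x t)) t)
    (hlam : lam ≠ 0) :
    ∀ t ∈ Set.Icc a b, φ (x t) = 0 :=
  equilibrium_forces_trivial_eigenfunction_general a b t₀ x φ lam ht₀ ht₀b heq hφ hlam
end

section
/- Let Φ : ℝ^N → ℝ^N be differentiable with invertible Jacobian J(Φ)(x(t)) along a solution x of x'(t) = P(x(t)), and suppose each component of Φ ∘ x satisfies (Φᵢ ∘ x)'(t) = λᵢ·Φᵢ(x(t)). Then P(x(t)) = (J(Φ)(x(t)))⁻¹ · Λ · Φ(x(t)) for all t ∈ I, where Λ = diag(λ₁,...,λ_N). -/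
open Matrix

theorem hasDerivAt_diagonal_mulVec_of_forall_hasDerivAt {ι : Type*} [Fintype ι] [DecidableEq ι]
    {f : ℝ → ι → ℝ} {lam : ι → ℝ} {t : ℝ}
    (hf : ∀ i, HasDerivAt (fun s => f s i) (lam i * f t i) t) :
    HasDerivAt f (diagonal lam *ᵥ f t) t := by
  rw [hasDerivAt_pi]
  intro i
  simpa only [mulVec_diagonal] using hf i

theorem dynamic_reconstruction_from_eigenfunctions
    {N : ℕ} (I : Set ℝ)
    (P : (Fin N → ℝ) → (Fin N → ℝ))
    (x : ℝ → (Fin N → ℝ))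
    (Φ : (Fin N → ℝ) → (Fin N → ℝ))
    (J : (Fin N → ℝ) → Matrix (Fin N) (Fin N) ℝ)
    (lam : Fin N → ℝ)
    (hx : ∀ t ∈ I, HasDerivAt x (P (x t)) t)
    (hΦ : ∀ t ∈ I, HasFDerivAt Φ (LinearMap.toContinuousLinearMap ((J (x t)).mulVecLin)) (x t))
    (hinv : ∀ t ∈ I, IsUnit ((J (x t)).det))
    (heig : ∀ i : Fin N, ∀ t ∈ I,
        HasDerivAt (fun s => Φ (x s) i) (lam i * Φ (x t) i) t) :
    ∀ t ∈ I, P (x t) = (J (x t))⁻¹.mulVec ((Matrix.diagonal lam).mulVec (Φ (x t))) := by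
  intro t ht
  have hchain : HasDerivAt (fun s => Φ (x s)) (J (x t) *ᵥ P (x t)) t :=
    (hΦ t ht).comp_hasDerivAt t (hx t ht)
  have hkoopman : HasDerivAt (fun s => Φ (x s)) (diagonal lam *ᵥ Φ (x t)) t :=
    hasDerivAt_diagonal_mulVec_of_forall_hasDerivAt fun i => heig i t ht
  have := invertibleOfIsUnitDet _ (hinv t ht)
  exact (inv_mulVec_eq_vec (hkoopman.unique hchain)).symm
end

section
/- Let u : [0,L] × I → ℝ be a solution of u_t = 𝒫(u) on I = [a,b], and suppose there exists T ∈ I with T < b such that u(x,t) = u(x,T) for all x and all t ∈ [T, b]. If Φ : H → ℝ satisfies d/dt Φ(u(·,t)) = λ·Φ(u(·,t)) on I with λ ≠ 0, then Φ(u(·,t)) = 0 for all t ∈ I. -/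
/-! On `[T, b]` the trajectory is at rest, so `t ↦ Φ (u t)` has derivative `0` at an interior
point `t₀` of that interval; the eigen-equation makes the same derivative `λ Φ (u t₀)`, so
`Φ (u t₀) = 0` as `λ ≠ 0`. A solution of `f' = λ f` is `f t₀ e^{λ (t - t₀)}`, hence vanishes
identically once it vanishes at one point. -/

open Set Filter Topology

section LinearODE

variable {F : Type*} [NormedAddCommGroup F] [NormedSpace ℝ F] {f : ℝ → F} {c : ℝ}

theorem exp_neg_mul_smul_eq_of_hasDerivAt_eq_smul {a b : ℝ}
    (hf : ∀ t ∈ Icc a b, HasDerivAt f (c • f t) t) :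
    ∀ t ∈ Icc a b, Real.exp (-c * t) • f t = Real.exp (-c * a) • f a := by
  have hderiv : ∀ t ∈ Icc a b, HasDerivAt (fun s => Real.exp (-c * s) • f s) 0 t := by
    intro t ht
    have hexp : HasDerivAt (fun s => Real.exp (-c * s)) (Real.exp (-c * t) * -c) t := by
      simpa using ((hasDerivAt_id t).const_mul (-c)).exp
    refine (hexp.smul (hf t ht)).congr_deriv ?_
    rw [smul_smul, ← add_smul]
    ring_nf
    exact zero_smul ℝ _
  exact constant_of_has_deriv_right_zero
    (fun t ht => (hderiv t ht).continuousAt.continuousWithinAt)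
    (fun t ht => (hderiv t (Ico_subset_Icc_self ht)).hasDerivWithinAt)

theorem eqOn_zero_of_hasDerivAt_eq_smul {a b t₀ : ℝ}
    (hf : ∀ t ∈ Icc a b, HasDerivAt f (c • f t) t) (ht₀ : t₀ ∈ Icc a b) (hzero : f t₀ = 0) :
    EqOn f 0 (Icc a b) := by
  have hsol := exp_neg_mul_smul_eq_of_hasDerivAt_eq_smul hf
  have ha : f a = 0 := by
    simpa [hzero, eq_comm (a := (0 : F))] using hsol t₀ ht₀
  intro t ht
  simpa [ha] using hsol t ht

end LinearODE

theorem eq_zero_of_hasDerivAt_eq_smul_of_eventuallyEq_const {𝕜 F : Type*}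
    [NontriviallyNormedField 𝕜] [NormedAddCommGroup F] [NormedSpace 𝕜 F]
    {f : 𝕜 → F} {c x : 𝕜} {y : F} (hf : HasDerivAt f (c • f x) x)
    (hconst : f =ᶠ[𝓝 x] fun _ => y) (hc : c ≠ 0) : f x = 0 := by
  have hzero : HasDerivAt f 0 x := (hasDerivAt_const x y).congr_of_eventuallyEq hconst
  exact (smul_eq_zero.mp (hf.unique hzero)).resolve_left hc

theorem equilibrium_forces_trivial_eigenfunctional_general
    {H : Type*}
    (a b T : ℝ) (u : ℝ → H)
    (Φ : H → ℝ) (lam : ℝ)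
    (hT : T ∈ Set.Icc a b) (hTb : T < b)
    (hconst : ∀ t ∈ Set.Icc T b, u t = u T)
    (hΦ : ∀ t ∈ Set.Icc a b, HasDerivAt (fun s => Φ (u s)) (lam * Φ (u t)) t)
    (hlam : lam ≠ 0) :
    ∀ t ∈ Set.Icc a b, Φ (u t) = 0 := by
  obtain ⟨t₀, hTt₀, ht₀b⟩ := exists_between hTb
  have ht₀ : t₀ ∈ Icc a b := ⟨by linarith [hT.1], ht₀b.le⟩
  have hrest : (fun s => Φ (u s)) =ᶠ[𝓝 t₀] fun _ => Φ (u T) := by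
    filter_upwards [Ioo_mem_nhds hTt₀ ht₀b] with s hs
    rw [hconst s (Ioo_subset_Icc_self hs)]
  have hzero : Φ (u t₀) = 0 :=
    eq_zero_of_hasDerivAt_eq_smul_of_eventuallyEq_const (f := fun s => Φ (u s)) (hΦ t₀ ht₀)
      hrest hlam
  exact eqOn_zero_of_hasDerivAt_eq_smul (f := fun s => Φ (u s)) hΦ ht₀ hzero

theorem equilibrium_forces_trivial_eigenfunctional
    {H : Type*} [NormedAddCommGroup H] [InnerProductSpace ℝ H] [CompleteSpace H]
    (a b T : ℝ) (Pop : H → H) (u : ℝ → H)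
    (Φ : H → ℝ) (lam : ℝ)
    (hu : ∀ t ∈ Set.Icc a b, HasDerivAt u (Pop (u t)) t)
    (hT : T ∈ Set.Icc a b) (hTb : T < b)
    (hconst : ∀ t ∈ Set.Icc T b, u t = u T)
    (hΦ : ∀ t ∈ Set.Icc a b, HasDerivAt (fun s => Φ (u s)) (lam * Φ (u t)) t)
    (hlam : lam ≠ 0) :
    ∀ t ∈ Set.Icc a b, Φ (u t) = 0 :=
  equilibrium_forces_trivial_eigenfunctional_general a b T u Φ lam hT hTb hconst hΦ hlam
end
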